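/- In one dimension, the geometric canonical commutation relation holds: [x, p^(ri)]ψ := (x p^(ri) − p^(ri) x)ψ + G(s; x, p^(ri))ψ = iℏ(1 + x s')ψ, where p^(ri) = −iℏ(d/dx + s') and G(s;a,b) = a[s,b]_QPB − b[s,a]_QPB. -/

import Mathlib

open Complex

/-- One-dimensional geomentum operator `p^(ri)ψ = −iℏ(ψ' + s'ψ)`. -/
noncomputable def pri (ℏ : ℝ) (s ψ : ℝ → ℂ) : ℝ → ℂ :=
  fun x => -I * (ℏ : ℂ) * (deriv ψ x + deriv s x * ψ x)

/-- Geometric canonical commutation relation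
`[x, p^(ri)]ψ = (x p^(ri) − p^(ri) x)ψ + G(s; x, p^(ri))ψ = iℏ(1 + x s')ψ`,
where `G(s;x,p)ψ = x([s,p]_QPB ψ) − p([s,x]_QPB ψ)`. -/
theorem geometric_canonical_commutation (ℏ : ℝ) (hℏ : 0 < ℏ)
    (s ψ : ℝ → ℂ) (hs : ContDiff ℝ (⊤ : ℕ∞) s) (hψ : ContDiff ℝ (⊤ : ℕ∞) ψ) (x : ℝ) :
    ((x : ℂ) * pri ℏ s ψ x - pri ℏ s (fun y => (y : ℂ) * ψ y) x)
      + ((x : ℂ) * (s x * pri ℏ s ψ x - pri ℏ s (fun y => s y * ψ y) x)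
          - pri ℏ s (fun y => s y * ((y : ℂ) * ψ y) - (y : ℂ) * (s y * ψ y)) x)
      = I * (ℏ : ℂ) * (1 + (x : ℂ) * deriv s x) * ψ x := by
  have hψd : DifferentiableAt ℝ ψ x := (hψ.differentiable (by simp)).differentiableAt
  have hsd : DifferentiableAt ℝ s x := (hs.differentiable (by simp)).differentiableAt
  have hcoe : DifferentiableAt ℝ (fun y : ℝ => (y : ℂ)) x :=
    Complex.ofRealCLM.differentiable.differentiableAt
  have hdcoe : deriv (fun y : ℝ => (y : ℂ)) x = 1 := by
    exact (Complex.ofRealCLM.hasDerivAt (x := x)).deriv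
  have h1 : deriv (fun y : ℝ => (y : ℂ) * ψ y) x = ψ x + (x : ℂ) * deriv ψ x := by
    rw [deriv_fun_mul hcoe hψd, hdcoe]; ring
  have h2 : deriv (fun y => s y * ψ y) x = deriv s x * ψ x + s x * deriv ψ x :=
    deriv_fun_mul hsd hψd
  have h3 : (fun y => s y * ((y : ℂ) * ψ y) - (y : ℂ) * (s y * ψ y)) = fun _ : ℝ => (0 : ℂ) := by
    funext y; ring
  simp only [pri, h1, h2, h3, deriv_const]
  ring
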